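/- arXiv:1711.05335 — 6 statements merged into one kernel-verified Lean document; each statement's English description precedes it below -/
import Mathlib

section
/- The Markoff equation x² + y² + z² = 3xyz has no solution in nonzero complex numbers of the form x = (ξ + ξ⁻¹)/3, y = (ζ + ζ⁻¹)/3, z = (η + η⁻¹)/3 where ξ, ζ, η are complex numbers of absolute value 1, except the trivial solution x = y = z = 0. -/
/-!
On the unit circle `ξ⁻¹ = conj ξ`, so `(ξ + ξ⁻¹)/3 = 2 Re ξ / 3` is a real number of absolute
value at most `2/3`. For real solutions with `|a| ≤ 2/3` the Markoff equation forces `a = 0`, since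
`a² = 3abc - (b² + c²) ≤ 2|b||c| - (b² + c²) = -(|b| - |c|)² ≤ 0`, and then `b² + c² = 0`.
-/

theorem markoff_eq_zero_of_abs_le {a b c : ℝ} (ha : |a| ≤ 2 / 3)
    (h : a ^ 2 + b ^ 2 + c ^ 2 = 3 * a * b * c) : a = 0 ∧ b = 0 ∧ c = 0 := by
  have habc : 3 * a * b * c ≤ 2 * (|b| * |c|) :=
    calc 3 * a * b * c = 3 * (a * b * c) := by ring
      _ ≤ 3 * |a * b * c| := by gcongr; exact le_abs_self _
      _ = 3 * |a| * (|b| * |c|) := by rw [abs_mul, abs_mul]; ring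
      _ ≤ 2 * (|b| * |c|) := by gcongr; linarith
  have ha0 : a = 0 := by
    nlinarith [sq_nonneg (|b| - |c|), sq_abs b, sq_abs c, sq_nonneg a]
  subst ha0
  exact ⟨rfl, by nlinarith [sq_nonneg b, sq_nonneg c], by nlinarith [sq_nonneg b, sq_nonneg c]⟩

theorem Complex.exists_ofReal_add_inv_div_three {ξ : ℂ} (hξ : ‖ξ‖ = 1) :
    ∃ a : ℝ, (ξ + ξ⁻¹) / 3 = a ∧ |a| ≤ 2 / 3 := by
  refine ⟨2 * ξ.re / 3, ?_, ?_⟩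
  · rw [inv_eq_conj hξ, add_conj]
    push_cast
    ring
  · obtain ⟨hlo, hhi⟩ := abs_le.mp (hξ ▸ abs_re_le_norm ξ)
    rw [abs_le]
    constructor <;> linarith

theorem markoff_no_unit_circle_solutions (ξ ζ η : ℂ)
    (hξ : ‖ξ‖ = 1) (hζ : ‖ζ‖ = 1) (hη : ‖η‖ = 1)
    (x y z : ℂ) (hx : x = (ξ + ξ⁻¹)/3) (hy : y = (ζ + ζ⁻¹)/3) (hz : z = (η + η⁻¹)/3)
    (h : x^2 + y^2 + z^2 = 3*x*y*z) :
    x = 0 ∧ y = 0 ∧ z = 0 := by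
  obtain ⟨a, rfl, ha⟩ := hx ▸ Complex.exists_ofReal_add_inv_div_three hξ
  obtain ⟨b, rfl, -⟩ := hy ▸ Complex.exists_ofReal_add_inv_div_three hζ
  obtain ⟨c, rfl, -⟩ := hz ▸ Complex.exists_ofReal_add_inv_div_three hη
  obtain ⟨rfl, rfl, rfl⟩ := markoff_eq_zero_of_abs_le ha (by exact_mod_cast h)
  simp
end

section
/- If x, y, z are real numbers with |x| ≤ 2/3, |y| ≤ 2/3, |z| ≤ 2/3 and x² + y² + z² = 3xyz, then x = y = z = 0. -/
/-!
If `|x| ≤ 2/3`, then by AM-GM `x² + y² + z² = 3xyz ≤ 3|x||y||z| ≤ 2|y||z| ≤ y² + z²`,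
so `x = 0`, and then `y² + z² = 0`.
-/

section

variable {K : Type*} [Field K] [LinearOrder K] [IsStrictOrderedRing K]

theorem markoff_eq_zero_left_of_abs_le {x y z : K} (hx : |x| ≤ 2 / 3)
    (h : x ^ 2 + y ^ 2 + z ^ 2 = 3 * x * y * z) : x = 0 := by
  have hyz : 2 * |y| * |z| ≤ y ^ 2 + z ^ 2 := by
    simpa only [sq_abs] using two_mul_le_add_sq |y| |z|
  have hbound : x ^ 2 + y ^ 2 + z ^ 2 ≤ y ^ 2 + z ^ 2 :=
    calc x ^ 2 + y ^ 2 + z ^ 2 = 3 * x * y * z := h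
      _ ≤ 3 * |x| * |y| * |z| := by
        simpa only [abs_mul, abs_of_pos (three_pos : (0 : K) < 3)] using le_abs_self (3 * x * y * z)
      _ ≤ 3 * (2 / 3) * |y| * |z| := by gcongr
      _ = 2 * |y| * |z| := by ring
      _ ≤ y ^ 2 + z ^ 2 := hyz
  exact pow_eq_zero_iff two_ne_zero |>.mp (le_antisymm (by linarith) (sq_nonneg x))

theorem markoff_eq_zero_of_abs_le_s3 {x y z : K} (hx : |x| ≤ 2 / 3)
    (h : x ^ 2 + y ^ 2 + z ^ 2 = 3 * x * y * z) : x = 0 ∧ y = 0 ∧ z = 0 := by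
  obtain rfl := markoff_eq_zero_left_of_abs_le hx h
  have hyz : y ^ 2 + z ^ 2 = 0 := by simpa using h
  obtain ⟨hy, hz⟩ := (add_eq_zero_iff_of_nonneg (sq_nonneg y) (sq_nonneg z)).mp hyz
  exact ⟨rfl, pow_eq_zero_iff two_ne_zero |>.mp hy, pow_eq_zero_iff two_ne_zero |>.mp hz⟩

end

theorem markoff_small_real_solutions_general (x y z : ℝ)
    (hx : |x| ≤ 2/3)
    (h : x^2 + y^2 + z^2 = 3*x*y*z) :
    x = 0 ∧ y = 0 ∧ z = 0 :=
  markoff_eq_zero_of_abs_le_s3 hx h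

theorem markoff_small_real_solutions (x y z : ℝ)
    (hx : |x| ≤ 2/3) (hy : |y| ≤ 2/3) (hz : |z| ≤ 2/3)
    (h : x^2 + y^2 + z^2 = 3*x*y*z) :
    x = 0 ∧ y = 0 ∧ z = 0 :=
  markoff_small_real_solutions_general x y z hx h
end

section
/- For any fixed real γ with 0 < γ < 1, if z ≥ exp((log n)^{γ + o(1)}) then the number of divisors of n that are at most z is at most z^{1-γ+o(1)} as n → ∞. More precisely: for every ε > 0 there exists N such that for all n ≥ N and all z with z ≥ exp((log n)^γ), the number of divisors d of n with d ≤ z is at most z^{1-γ+ε}. -/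
/-!
Rankin's trick: for `0 < σ < 1`, every divisor `d ≤ z` of `n` satisfies `1 ≤ (z / d) ^ σ`, so
`#{d ∣ n | d ≤ z} ≤ z ^ σ ∑_{d ∣ n} d ^ (-σ) ≤ z ^ σ ∏_{p ∣ n} (1 - p ^ (-σ))⁻¹
  ≤ z ^ σ exp (c_σ ∑_{p ∣ n} p ^ (-σ))` with `c_σ = (1 - 2 ^ (-σ))⁻¹`.
With `L = log n`, the prime factors `p ≤ L` contribute at most `L ^ (1 - σ) (1 + log L)` (write
`p ^ (-σ) ≤ L ^ (1 - σ) / p` and use the harmonic sum), and the at most `2 L` others at most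
`L ^ (-σ)` each. Taking `σ = 1 - γ + δ`, the exponent is `O(L ^ (γ - δ) log L) ≤ δ L ^ γ ≤ δ log z`
for large `n`, which gives the bound `z ^ (1 - γ + 2 δ)`.
-/

open Finset Real

namespace ArithmeticFunction

/-- `toArithmeticFunction` forces the value `0` at `0`, where `(0 : ℝ) ^ (0 : ℝ) = 1`. -/
noncomputable def rpow (s : ℝ) : ArithmeticFunction ℝ :=
  toArithmeticFunction fun d ↦ (d : ℝ) ^ s

lemma rpow_apply (s : ℝ) {d : ℕ} (hd : d ≠ 0) : rpow s d = (d : ℝ) ^ s :=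
  if_neg hd

lemma isMultiplicative_rpow (s : ℝ) : (rpow s).IsMultiplicative := by
  refine IsMultiplicative.iff_ne_zero.mpr ⟨?_, fun {m n} hm hn _ ↦ ?_⟩
  · simp [rpow_apply]
  · rw [rpow_apply s (mul_ne_zero hm hn), rpow_apply s hm, rpow_apply s hn, Nat.cast_mul,
      Real.mul_rpow (by positivity) (by positivity)]

end ArithmeticFunction

lemma Nat.sum_divisors_rpow {n : ℕ} (hn : n ≠ 0) (s : ℝ) :
    ∑ d ∈ n.divisors, (d : ℝ) ^ s =
      ∏ p ∈ n.primeFactors, ∑ k ∈ range (n.factorization p + 1), ((p : ℝ) ^ s) ^ k := by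
  have hsum (m : ℕ) : (↑ArithmeticFunction.zeta * ArithmeticFunction.rpow s) m =
      ∑ d ∈ m.divisors, (d : ℝ) ^ s := by
    rw [ArithmeticFunction.coe_zeta_mul_apply]
    exact sum_congr rfl fun d hd ↦
      ArithmeticFunction.rpow_apply s (Nat.pos_of_mem_divisors hd).ne'
  have hmul := ArithmeticFunction.isMultiplicative_zeta.natCast.mul
    (ArithmeticFunction.isMultiplicative_rpow s)
  rw [← hsum, hmul.multiplicative_factorization _ hn]
  refine prod_congr n.support_factorization fun p hp ↦ ?_
  dsimp only
  rw [hsum, Nat.sum_divisors_prime_pow (Nat.prime_of_mem_primeFactors hp)]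
  simp_rw [Nat.cast_pow, ← rpow_natCast, ← rpow_mul (Nat.cast_nonneg p), mul_comm]

lemma geom_sum_le_exp {r t : ℝ} (hr : 0 ≤ r) (hrt : r ≤ t) (ht : t < 1) (m : ℕ) :
    ∑ k ∈ range m, r ^ k ≤ exp ((1 - t)⁻¹ * r) := by
  have hr1 : 0 < 1 - r := by linarith
  calc ∑ k ∈ range m, r ^ k ≤ (1 - r)⁻¹ := by
        simpa [← Nat.Ico_zero_eq_range, div_eq_mul_inv] using
          geom_sum_Ico_le_of_lt_one hr (hrt.trans_lt ht) (m := 0) (n := m)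
    _ = (1 - r)⁻¹ * r + 1 := by field_simp; ring
    _ ≤ exp ((1 - r)⁻¹ * r) := add_one_le_exp _
    _ ≤ exp ((1 - t)⁻¹ * r) := by gcongr

lemma Nat.sum_divisors_rpow_neg_le_exp {σ : ℝ} (hσ : 0 < σ) {n : ℕ} (hn : n ≠ 0) :
    ∑ d ∈ n.divisors, (d : ℝ) ^ (-σ) ≤
      exp ((1 - 2 ^ (-σ))⁻¹ * ∑ p ∈ n.primeFactors, (p : ℝ) ^ (-σ)) := by
  rw [Nat.sum_divisors_rpow hn, mul_sum, exp_sum]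
  refine prod_le_prod (fun p _ ↦ sum_nonneg fun k _ ↦ by positivity) fun p hp ↦ ?_
  have hp : (2 : ℝ) ≤ p := by exact_mod_cast (Nat.prime_of_mem_primeFactors hp).two_le
  exact geom_sum_le_exp (by positivity) (rpow_le_rpow_of_nonpos two_pos hp (by linarith))
    (rpow_lt_one_of_one_lt_of_neg one_lt_two (by linarith)) _

lemma card_filter_le_rpow_mul_sum_rpow_neg {s : Finset ℕ} (hs : 0 ∉ s) {σ z : ℝ} (hσ : 0 ≤ σ)
    (hz : 0 ≤ z) :
    (#(s.filter fun d : ℕ ↦ (d : ℝ) ≤ z) : ℝ) ≤ z ^ σ * ∑ d ∈ s, (d : ℝ) ^ (-σ) := by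
  have hpos (d : ℕ) (hd : d ∈ s) : 0 < (d : ℝ) := by
    exact_mod_cast Nat.pos_of_ne_zero (ne_of_mem_of_not_mem hd hs)
  rw [mul_sum, card_eq_sum_ones, Nat.cast_sum, Nat.cast_one]
  calc ∑ d ∈ s.filter fun d : ℕ ↦ (d : ℝ) ≤ z, (1 : ℝ)
      ≤ ∑ d ∈ s.filter fun d : ℕ ↦ (d : ℝ) ≤ z, z ^ σ * (d : ℝ) ^ (-σ) := by
        refine sum_le_sum fun d hd ↦ ?_
        obtain ⟨hds, hdz⟩ := mem_filter.mp hd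
        rw [rpow_neg (hpos d hds).le, ← div_eq_mul_inv, one_le_div (by positivity [hpos d hds])]
        exact rpow_le_rpow (hpos d hds).le hdz hσ
    _ ≤ ∑ d ∈ s, z ^ σ * (d : ℝ) ^ (-σ) :=
        sum_le_sum_of_subset_of_nonneg (filter_subset _ _) fun d hd _ ↦ by positivity [hpos d hd]

lemma sum_filter_inv_le_one_add_log {s : Finset ℕ} {L : ℝ} (hL : 1 ≤ L) :
    ∑ m ∈ s.filter fun m : ℕ ↦ (m : ℝ) ≤ L, (m : ℝ)⁻¹ ≤ 1 + log L := by
  have hsub : s.filter (fun m : ℕ ↦ (m : ℝ) ≤ L) ⊆ insert 0 (Icc 1 ⌊L⌋₊) := by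
    intro m hm
    rcases Nat.eq_zero_or_pos m with rfl | hm0
    · exact mem_insert_self _ _
    · exact mem_insert_of_mem (mem_Icc.mpr ⟨hm0, Nat.le_floor (mem_filter.mp hm).2⟩)
  have hfloor : 1 ≤ ⌊L⌋₊ := Nat.le_floor (by exact_mod_cast hL)
  calc ∑ m ∈ s.filter fun m : ℕ ↦ (m : ℝ) ≤ L, (m : ℝ)⁻¹
      ≤ ∑ m ∈ insert 0 (Icc 1 ⌊L⌋₊), (m : ℝ)⁻¹ :=
        sum_le_sum_of_subset_of_nonneg hsub fun _ _ _ ↦ by positivity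
    _ = harmonic ⌊L⌋₊ := by
        rw [sum_insert (by simp), harmonic_eq_sum_Icc]; push_cast; simp
    _ ≤ 1 + log ⌊L⌋₊ := harmonic_le_one_add_log _
    _ ≤ 1 + log L := by gcongr; exact Nat.floor_le (by linarith)

lemma card_primeFactors_le_two_mul_log (n : ℕ) : (#n.primeFactors : ℝ) ≤ 2 * log n := by
  rcases eq_or_ne n 0 with rfl | hn
  · simp
  have hpow : (2 : ℝ) ^ #n.primeFactors ≤ n := by
    calc (2 : ℝ) ^ #n.primeFactors = ∏ _p ∈ n.primeFactors, (2 : ℝ) := (prod_const _).symm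
      _ ≤ ∏ p ∈ n.primeFactors, (p : ℝ) :=
          prod_le_prod (fun _ _ ↦ zero_le_two) fun p hp ↦ by
            exact_mod_cast (Nat.prime_of_mem_primeFactors hp).two_le
      _ ≤ n := by
          rw [← Nat.cast_prod]
          exact_mod_cast Nat.le_of_dvd (Nat.pos_of_ne_zero hn) (Nat.prod_primeFactors_dvd n)
  have hlog : #n.primeFactors * log 2 ≤ log n := by
    rw [← log_pow]; exact log_le_log (by positivity) hpow
  nlinarith [log_two_gt_d9, (#n.primeFactors).cast_nonneg (α := ℝ)]

lemma sum_rpow_neg_le {s : Finset ℕ} (hs : 0 ∉ s) {σ L : ℝ} (hσ0 : 0 ≤ σ) (hσ1 : σ ≤ 1)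
    (hL : 1 ≤ L) : ∑ m ∈ s, (m : ℝ) ^ (-σ) ≤ L ^ (1 - σ) * (1 + log L) + #s * L ^ (-σ) := by
  have hpos (m : ℕ) (hm : m ∈ s) : 0 < (m : ℝ) := by
    exact_mod_cast Nat.pos_of_ne_zero (ne_of_mem_of_not_mem hm hs)
  rw [← sum_filter_add_sum_filter_not s (fun m : ℕ ↦ (m : ℝ) ≤ L)]
  gcongr ?_ + ?_
  · calc ∑ m ∈ s.filter fun m : ℕ ↦ (m : ℝ) ≤ L, (m : ℝ) ^ (-σ)
          ≤ ∑ m ∈ s.filter fun m : ℕ ↦ (m : ℝ) ≤ L, L ^ (1 - σ) * (m : ℝ)⁻¹ := by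
          refine sum_le_sum fun m hm ↦ ?_
          obtain ⟨hms, hmL⟩ := mem_filter.mp hm
          have hsplit : (m : ℝ) ^ (-σ) = (m : ℝ) ^ (1 - σ) * (m : ℝ)⁻¹ := by
            rw [← div_eq_mul_inv, ← rpow_sub_one (hpos m hms).ne', sub_sub_cancel_left]
          rw [hsplit]
          gcongr
      _ = L ^ (1 - σ) * ∑ m ∈ s.filter fun m : ℕ ↦ (m : ℝ) ≤ L, (m : ℝ)⁻¹ :=
          (mul_sum _ _ _).symm
      _ ≤ L ^ (1 - σ) * (1 + log L) := by gcongr; exact sum_filter_inv_le_one_add_log hL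
  · calc ∑ m ∈ s.filter fun m : ℕ ↦ ¬(m : ℝ) ≤ L, (m : ℝ) ^ (-σ)
          ≤ ∑ m ∈ s.filter fun m : ℕ ↦ ¬(m : ℝ) ≤ L, L ^ (-σ) :=
          sum_le_sum fun m hm ↦ rpow_le_rpow_of_nonpos (by linarith)
            (not_le.mp (mem_filter.mp hm).2).le (by linarith)
      _ ≤ #s * L ^ (-σ) := by
          rw [sum_const, nsmul_eq_mul]; gcongr; exact filter_subset _ _

lemma sum_primeFactors_rpow_neg_le {σ : ℝ} (hσ0 : 0 ≤ σ) (hσ1 : σ ≤ 1) {n : ℕ}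
    (hn : 1 ≤ log n) :
    ∑ p ∈ n.primeFactors, (p : ℝ) ^ (-σ) ≤ log n ^ (1 - σ) * (3 + log (log n)) := by
  have hsplit := sum_rpow_neg_le (by simp : 0 ∉ n.primeFactors) hσ0 hσ1 hn
  have hlarge : #n.primeFactors * log n ^ (-σ) ≤ 2 * log n ^ (1 - σ) := by
    calc #n.primeFactors * log n ^ (-σ) ≤ 2 * log n * log n ^ (-σ) := by
          gcongr; exact card_primeFactors_le_two_mul_log n
      _ = 2 * log n ^ (1 - σ) := by
          rw [mul_assoc, sub_eq_add_neg, rpow_add (by linarith), rpow_one]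
  linarith

lemma card_filter_divisors_le {σ z : ℝ} (hσ0 : 0 < σ) (hσ1 : σ ≤ 1) (hz : 0 ≤ z) {n : ℕ}
    (hn : 1 ≤ log n) :
    (#(n.divisors.filter fun d : ℕ ↦ (d : ℝ) ≤ z) : ℝ) ≤
      z ^ σ * exp ((1 - 2 ^ (-σ))⁻¹ * (log n ^ (1 - σ) * (3 + log (log n)))) := by
  have hn0 : n ≠ 0 := by rintro rfl; norm_num at hn
  have hc : 0 ≤ (1 - (2 : ℝ) ^ (-σ))⁻¹ := by
    rw [inv_nonneg, sub_nonneg]; exact rpow_le_one_of_one_le_of_nonpos one_le_two (by linarith)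
  calc (#(n.divisors.filter fun d : ℕ ↦ (d : ℝ) ≤ z) : ℝ)
      ≤ z ^ σ * ∑ d ∈ n.divisors, (d : ℝ) ^ (-σ) :=
        card_filter_le_rpow_mul_sum_rpow_neg (by simp) hσ0.le hz
    _ ≤ z ^ σ * exp ((1 - 2 ^ (-σ))⁻¹ * ∑ p ∈ n.primeFactors, (p : ℝ) ^ (-σ)) := by
        gcongr; exact Nat.sum_divisors_rpow_neg_le_exp hσ0 hn0
    _ ≤ z ^ σ * exp ((1 - 2 ^ (-σ))⁻¹ * (log n ^ (1 - σ) * (3 + log (log n)))) := by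
        gcongr; exact sum_primeFactors_rpow_neg_le hσ0.le hσ1 hn

lemma eventually_mul_three_add_log_le {c δ : ℝ} (hc : 0 < c) (hδ : 0 < δ) :
    ∀ᶠ L in Filter.atTop, c * (3 + log L) ≤ δ * L ^ δ := by
  have ho : (fun L ↦ 3 + log L) =o[Filter.atTop] fun L ↦ L ^ δ :=
    (Asymptotics.isLittleO_const_left.mpr
      (Or.inr (tendsto_norm_atTop_atTop.comp (tendsto_rpow_atTop hδ)))).add
      (isLittleO_log_rpow_atTop hδ)
  filter_upwards [ho.bound (div_pos hδ hc), Filter.eventually_ge_atTop 1] with L hL hL1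
  rw [norm_of_nonneg (by positivity [log_nonneg hL1]), norm_of_nonneg (by positivity)] at hL
  calc c * (3 + log L) ≤ c * (δ / c * L ^ δ) := by gcongr
    _ = δ * L ^ δ := by field_simp

open Finset Classical in
theorem small_divisors_bound (γ : ℝ) (hγ0 : 0 < γ) (hγ1 : γ < 1) :
    ∀ ε : ℝ, 0 < ε → ∃ N : ℕ, ∀ n : ℕ, N ≤ n → ∀ z : ℝ,
      Real.exp ((Real.log n) ^ γ) ≤ z →
      ((n.divisors.filter (fun d : ℕ => (d : ℝ) ≤ z)).card : ℝ) ≤ z ^ (1 - γ + ε) := by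
  intro ε hε
  obtain ⟨δ, hδ, hδε, hδγ⟩ : ∃ δ : ℝ, 0 < δ ∧ 2 * δ ≤ ε ∧ 2 * δ ≤ γ :=
    ⟨min ε γ / 2, by positivity, by linarith [min_le_left ε γ], by linarith [min_le_right ε γ]⟩
  set σ := 1 - γ + δ with hσ
  set c := (1 - (2 : ℝ) ^ (-σ))⁻¹
  have hc : 0 < c :=
    inv_pos.mpr (sub_pos.mpr (rpow_lt_one_of_one_lt_of_neg one_lt_two (by linarith)))
  obtain ⟨N, hN⟩ := Filter.eventually_atTop.mp <|
    (tendsto_log_atTop.comp tendsto_natCast_atTop_atTop).eventually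
      ((eventually_mul_three_add_log_le hc hδ).and (Filter.eventually_ge_atTop 1))
  refine ⟨N, fun n hn z hz ↦ ?_⟩
  obtain ⟨hkey, hL⟩ : c * (3 + log (log n)) ≤ δ * log n ^ δ ∧ 1 ≤ log n := hN n hn
  have hexponent : c * (log n ^ (1 - σ) * (3 + log (log n))) ≤ δ * log n ^ γ := by
    calc c * (log n ^ (1 - σ) * (3 + log (log n)))
        = log n ^ (1 - σ) * (c * (3 + log (log n))) := by ring
      _ ≤ log n ^ (1 - σ) * (δ * log n ^ δ) := mul_le_mul_of_nonneg_left hkey (by positivity)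
      _ = δ * log n ^ γ := by rw [mul_left_comm, ← rpow_add (by linarith), hσ]; ring_nf
  have hz1 : 1 ≤ z := (one_le_exp (by positivity)).trans hz
  calc ((n.divisors.filter (fun d : ℕ => (d : ℝ) ≤ z)).card : ℝ)
      ≤ z ^ σ * exp (c * (log n ^ (1 - σ) * (3 + log (log n)))) :=
        card_filter_divisors_le (by linarith) (by linarith) (by linarith) hL
    _ ≤ z ^ σ * exp (log n ^ γ) ^ δ := by rw [← exp_mul, mul_comm _ δ]; gcongr
    _ ≤ z ^ σ * z ^ δ := by gcongr
    _ = z ^ (1 - γ + 2 * δ) := by rw [← rpow_add (by linarith), hσ]; ring_nf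
    _ ≤ z ^ (1 - γ + ε) := rpow_le_rpow_of_exponent_le hz1 (by linarith)
end

section
/- If n has s distinct prime factors and p_1 < p_2 < ... < p_s are the first s primes, then the number of divisors of n that are at most z is bounded by the number of p_s-smooth positive integers up to z. -/
/-!
Let `P` be the set of prime factors of `n`. Replacing the `i`-th smallest element of `P` by the
`i`-th prime, in every divisor of `n`, is injective by unique factorization, does not increase
the divisor (the `i`-th smallest element of a set of primes is at least the `i`-th prime), and
produces a `p_s`-smooth number.
-/

open Finset

namespace Nat

def mapPrimes (σ : ℕ → ℕ) (d : ℕ) : ℕ :=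
  d.factorization.prod fun p k => σ p ^ k

variable {σ : ℕ → ℕ} {d : ℕ}

theorem mapPrimes_le (hd : d ≠ 0) (hσ : ∀ p ∈ d.primeFactors, σ p ≤ p) :
    mapPrimes σ d ≤ d :=
  calc mapPrimes σ d = ∏ p ∈ d.primeFactors, σ p ^ d.factorization p := rfl
    _ ≤ ∏ p ∈ d.primeFactors, p ^ d.factorization p :=
      prod_le_prod' fun p hp => Nat.pow_le_pow_left (hσ p hp) _
    _ = d := prod_factorization_pow_eq_self hd

theorem mapPrimes_pos (hσ : ∀ p ∈ d.primeFactors, (σ p).Prime) : 0 < mapPrimes σ d :=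
  prod_pos fun p hp => pow_pos (hσ p hp).pos _

theorem factorization_mapPrimes (hσ : ∀ p ∈ d.primeFactors, (σ p).Prime) :
    (mapPrimes σ d).factorization = d.factorization.mapDomain σ := by
  have hprod : mapPrimes σ d = (d.factorization.mapDomain σ).prod (· ^ ·) := by
    rw [Finsupp.prod_mapDomain_index (fun _ => pow_zero _) fun _ _ _ => pow_add _ _ _]
    rfl
  rw [hprod, prod_pow_factorization_eq_self]
  intro q hq
  obtain ⟨p, hp, rfl⟩ := mem_image.1 (Finsupp.mapDomain_support hq)
  exact hσ p hp

theorem primeFactors_mapPrimes_subset (hσ : ∀ p ∈ d.primeFactors, (σ p).Prime) :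
    (mapPrimes σ d).primeFactors ⊆ d.primeFactors.image σ := by
  rw [← support_factorization, factorization_mapPrimes hσ]
  exact Finsupp.mapDomain_support

theorem mapPrimes_injOn {S : Set ℕ} (hσ : ∀ p ∈ S, (σ p).Prime) (hinj : S.InjOn σ) :
    Set.InjOn (mapPrimes σ) {d | d ≠ 0 ∧ ↑d.primeFactors ⊆ S} := by
  intro d₁ ⟨hd₁, hS₁⟩ d₂ ⟨hd₂, hS₂⟩ h
  have hfac := congrArg factorization h
  rw [factorization_mapPrimes fun p hp => hσ p (hS₁ hp),
    factorization_mapPrimes fun p hp => hσ p (hS₂ hp)] at hfac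
  refine factorization_inj hd₁ hd₂ (Finsupp.mapDomain_injOn S hinj ?_ ?_ hfac)
  · simpa only [Set.mem_ofPred_eq, support_factorization] using hS₁
  · simpa only [Set.mem_ofPred_eq, support_factorization] using hS₂

theorem nth_prime_card_le {S : Finset ℕ} {p : ℕ} (hp : p.Prime) (hS : S ⊆ p.primesBelow) :
    nth Prime #S ≤ p :=
  calc nth Prime #S ≤ nth Prime (primeCounting' p) :=
        (nth_le_nth infinite_setOfPred_prime).2 <|
          (card_le_card hS).trans_eq (primesBelow_card_eq_primeCounting' p)
    _ = p := nth_count hp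

noncomputable def primeRank (P : Finset ℕ) (p : ℕ) : ℕ :=
  nth Prime #{q ∈ P | q < p}

variable {P : Finset ℕ} {p : ℕ}

theorem primeRank_le (hP : ∀ q ∈ P, q.Prime) (hp : p ∈ P) : primeRank P p ≤ p := by
  refine nth_prime_card_le (hP p hp) fun q hq => ?_
  obtain ⟨hqP, hqp⟩ := mem_filter.1 hq
  exact mem_primesBelow.2 ⟨hqp, hP q hqP⟩

theorem primeRank_le_nth_card_sub_one (hp : p ∈ P) : primeRank P p ≤ nth Prime (#P - 1) := by
  have hlt : #{q ∈ P | q < p} < #P :=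
    card_lt_card (filter_ssubset.2 ⟨p, hp, lt_irrefl p⟩)
  exact (nth_le_nth infinite_setOfPred_prime).2 (by omega)

theorem primeRank_strictMonoOn : StrictMonoOn (primeRank P) P := by
  intro p hp q _ hpq
  refine nth_strictMono infinite_setOfPred_prime (card_lt_card ?_)
  have hsub : {r ∈ P | r < p} ⊆ {r ∈ P | r < q} := fun r hr => by
    rw [mem_filter] at hr ⊢
    exact ⟨hr.1, hr.2.trans hpq⟩
  exact (ssubset_iff_of_subset hsub).2 ⟨p, mem_filter.2 ⟨hp, hpq⟩, by simp⟩

end Nat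

open Finset Classical in
theorem divisors_le_smooth_count_general (n s z : ℕ)
    (hω : n.primeFactors.card = s) :
    (n.divisors.filter (fun d => d ≤ z)).card ≤
      ((Finset.Icc 1 z).filter
        (fun k => ∀ q : ℕ, q.Prime → q ∣ k → q ≤ Nat.nth Nat.Prime (s - 1))).card := by
  set P := n.primeFactors
  have hP : ∀ p ∈ P, p.Prime := fun p => Nat.prime_of_mem_primeFactors
  have hσ : ∀ p, (Nat.primeRank P p).Prime := fun _ => Nat.prime_nth_prime _
  have hdiv : ∀ d ∈ n.divisors.filter (· ≤ z), d ≠ 0 ∧ d.primeFactors ⊆ P ∧ d ≤ z := by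
    intro d hd
    obtain ⟨⟨hdn, hn⟩, hdz⟩ := by simpa only [mem_filter, Nat.mem_divisors] using hd
    exact ⟨ne_zero_of_dvd_ne_zero hn hdn, Nat.primeFactors_mono hdn hn, hdz⟩
  refine card_le_card_of_injOn (Nat.mapPrimes (Nat.primeRank P)) (fun d hd => ?_) ?_
  · obtain ⟨hd, hdP, hdz⟩ := hdiv d hd
    have hpos := Nat.mapPrimes_pos (σ := Nat.primeRank P) (d := d) fun p _ => hσ p
    refine mem_filter.2 ⟨mem_Icc.2 ⟨hpos, ?_⟩, fun q hq hqd => ?_⟩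
    · exact (Nat.mapPrimes_le hd fun p hp => Nat.primeRank_le hP (hdP hp)).trans hdz
    · obtain ⟨p, hp, rfl⟩ := mem_image.1 <| Nat.primeFactors_mapPrimes_subset (fun p _ => hσ p)
        (Nat.mem_primeFactors.2 ⟨hq, hqd, hpos.ne'⟩)
      exact hω ▸ Nat.primeRank_le_nth_card_sub_one (hdP hp)
  · refine (Nat.mapPrimes_injOn (fun p _ => hσ p) Nat.primeRank_strictMonoOn.injOn).mono ?_
    intro d hd
    obtain ⟨hd, hdP, -⟩ := hdiv d hd
    exact ⟨hd, hdP⟩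

open Finset Classical in
theorem divisors_le_smooth_count (n s z : ℕ) (hn : 0 < n) (hs : 1 ≤ s)
    (hω : n.primeFactors.card = s) :
    (n.divisors.filter (fun d => d ≤ z)).card ≤
      ((Finset.Icc 1 z).filter
        (fun k => ∀ q : ℕ, q.Prime → q ∣ k → q ≤ Nat.nth Nat.Prime (s - 1))).card :=
  divisors_le_smooth_count_general n s z hω
end

section
/- Let F be a field of characteristic ≠ 2, 3. Suppose 3x = ξ + ξ⁻¹ for some ξ ∈ F with ξ² ∉ {0, 1, -1}, and let r = (ξ² + 1)²/(9(ξ² - 1)²). Then the solutions η of r = (η² + 1)²/(9(η² - 1)²) with η² ∉ {0,1,-1} are exactly η ∈ {ξ, -ξ, ξ⁻¹, -ξ⁻¹}, and the corresponding values (η + η⁻¹)/3 take at most two values, whose sum is 0. -/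
/-!
Writing `a = ξ²`, `b = η²`, clearing denominators turns `r(ξ) = r(η)` into
`(a + 1)²(b - 1)² - (b + 1)²(a - 1)² = 4 (b - a)(ab - 1) = 0`, so `η² = ξ²` or `η² = ξ⁻²`.
The value `η + η⁻¹` is unchanged by `η ↦ η⁻¹` and changes sign under `η ↦ -η`.
-/

section

variable {F : Type*} [Field F]

theorem sq_add_one_div_sq_sub_one_eq_iff (h2 : (2 : F) ≠ 0) {a b : F} (ha : a ≠ 1) (hb : b ≠ 1) :
    (a + 1) ^ 2 / (a - 1) ^ 2 = (b + 1) ^ 2 / (b - 1) ^ 2 ↔ a = b ∨ a * b = 1 := by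
  have ha' : (a - 1) ^ 2 ≠ 0 := pow_ne_zero 2 (sub_ne_zero.mpr ha)
  have hb' : (b - 1) ^ 2 ≠ 0 := pow_ne_zero 2 (sub_ne_zero.mpr hb)
  have factor : (a + 1) ^ 2 * (b - 1) ^ 2 - (b + 1) ^ 2 * (a - 1) ^ 2
      = 2 * 2 * ((b - a) * (a * b - 1)) := by ring
  rw [div_eq_div_iff ha' hb', ← sub_eq_zero, factor]
  simp [h2, sub_eq_zero, eq_comm (a := b)]

theorem sq_mul_sq_eq_one_iff {ξ η : F} (hξ : ξ ≠ 0) :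
    ξ ^ 2 * η ^ 2 = 1 ↔ η = ξ⁻¹ ∨ η = -ξ⁻¹ := by
  rw [mul_comm, mul_eq_one_iff_eq_inv₀ (pow_ne_zero 2 hξ), ← inv_pow,
    sq_eq_sq_iff_eq_or_eq_neg]

theorem add_inv_eq_or_eq_neg {ξ η : F} (h : η = ξ ∨ η = -ξ ∨ η = ξ⁻¹ ∨ η = -ξ⁻¹) :
    η + η⁻¹ = ξ + ξ⁻¹ ∨ η + η⁻¹ = -(ξ + ξ⁻¹) := by
  rcases h with rfl | rfl | rfl | rfl
  · exact .inl rfl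
  · exact .inr (by rw [inv_neg, neg_add])
  · exact .inl (by rw [inv_inv, add_comm])
  · exact .inr (by rw [inv_neg, inv_inv, neg_add, add_comm])

end

theorem fiber_of_r_general (F : Type*) [Field F] (h2 : (2 : F) ≠ 0) (h3 : (3 : F) ≠ 0)
    (x ξ r : F) (hξ0 : ξ ≠ 0) (hξ1 : ξ ^ 2 ≠ 1)
    (hx : 3 * x = ξ + ξ⁻¹) (hr : r = (ξ ^ 2 + 1) ^ 2 / (9 * (ξ ^ 2 - 1) ^ 2)) :
    (∀ η : F, η ≠ 0 → η ^ 2 ≠ 1 → η ^ 2 ≠ -1 →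
      (r = (η ^ 2 + 1) ^ 2 / (9 * (η ^ 2 - 1) ^ 2) ↔
        η = ξ ∨ η = -ξ ∨ η = ξ⁻¹ ∨ η = -ξ⁻¹)) ∧
    (∀ η : F, (η = ξ ∨ η = -ξ ∨ η = ξ⁻¹ ∨ η = -ξ⁻¹) →
      (η + η⁻¹) / 3 = x ∨ (η + η⁻¹) / 3 = -x) := by
  have h9 : (9 : F) ≠ 0 := by simpa [show (9 : F) = 3 ^ 2 by norm_num] using h3
  refine ⟨fun η _ hη1 _ => ?_, fun η hη => ?_⟩
  · rw [hr, div_mul_eq_div_div_swap, div_mul_eq_div_div_swap, div_left_inj' h9,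
      sq_add_one_div_sq_sub_one_eq_iff h2 hξ1 hη1, sq_mul_sq_eq_one_iff hξ0, eq_comm,
      sq_eq_sq_iff_eq_or_eq_neg, or_assoc]
  · rw [div_eq_iff h3, div_eq_iff h3, mul_comm x, neg_mul, mul_comm x, hx]
    exact add_inv_eq_or_eq_neg hη

theorem fiber_of_r (F : Type*) [Field F] (h2 : (2 : F) ≠ 0) (h3 : (3 : F) ≠ 0)
    (x ξ r : F) (hξ0 : ξ ≠ 0) (hξ1 : ξ ^ 2 ≠ 1) (hξneg1 : ξ ^ 2 ≠ -1)
    (hx : 3 * x = ξ + ξ⁻¹) (hr : r = (ξ ^ 2 + 1) ^ 2 / (9 * (ξ ^ 2 - 1) ^ 2)) :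
    (∀ η : F, η ≠ 0 → η ^ 2 ≠ 1 → η ^ 2 ≠ -1 →
      (r = (η ^ 2 + 1) ^ 2 / (9 * (η ^ 2 - 1) ^ 2) ↔
        η = ξ ∨ η = -ξ ∨ η = ξ⁻¹ ∨ η = -ξ⁻¹)) ∧
    (∀ η : F, (η = ξ ∨ η = -ξ ∨ η = ξ⁻¹ ∨ η = -ξ⁻¹) →
      (η + η⁻¹) / 3 = x ∨ (η + η⁻¹) / 3 = -x) :=
  fiber_of_r_general F h2 h3 x ξ r hξ0 hξ1 hx hr
end

section
/- Let P(X,Y) be a polynomial over a field with deg_X P ≤ m, deg_Y P ≤ n, and define recursively q_1 = -∂P/∂X, q_{k+1} = (∂q_k/∂X)(∂P/∂Y)² - (∂q_k/∂Y)(∂P/∂X)(∂P/∂Y) - (2k-1)q_k(∂²P/∂X∂Y)(∂P/∂Y) + (2k-1)q_k(∂²P/∂Y²)(∂P/∂X). Then for all k ≥ 1, deg_X q_k ≤ (2k-1)m - k and deg_Y q_k ≤ (2k-1)n - 2k + 2. -/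
/-!
Measure degrees by integer bounds: `p ∈ degreeOfLE R i d` says that every monomial of `p` has
`i`-exponent at most `d`. These bounds are preserved by sums, add up under products and drop by
one under `∂ᵢ`, with no truncation. If `deg_X P ≤ m` and `deg_Y P ≤ n`, each of the four terms of
the recursion raises the `X`-bound of `q_k` by `2m - 1` and its `Y`-bound by `2n - 2`, so the
bounds `(2k-1)m - k` and `(2k-1)n - 2k + 2` hold exactly over `ℤ`; the natural-number bounds
follow through `Int.toNat`.
-/

open MvPolynomial

namespace MvPolynomial

variable {σ : Type*} (R : Type*) [CommSemiring R]

noncomputable def degreeOfLE (i : σ) (d : ℤ) : Submodule R (MvPolynomial σ R) :=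
  restrictSupport R {s | (s i : ℤ) ≤ d}

variable {R} {i j : σ} {d e : ℤ} {p q : MvPolynomial σ R}

theorem mem_degreeOfLE : p ∈ degreeOfLE R i d ↔ ∀ s ∈ p.support, (s i : ℤ) ≤ d :=
  Iff.rfl

theorem degreeOfLE_mono (h : d ≤ e) : degreeOfLE R i d ≤ degreeOfLE R i e :=
  restrictSupport_mono R fun _ hs => le_trans hs h

theorem mem_degreeOfLE_of_degreeOf_le {n : ℕ} (h : degreeOf i p ≤ n) :
    p ∈ degreeOfLE R i n :=
  mem_degreeOfLE.2 fun s hs => by exact_mod_cast degreeOf_le_iff.1 h s hs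

theorem degreeOf_le_toNat_of_mem_degreeOfLE (h : p ∈ degreeOfLE R i d) :
    degreeOf i p ≤ d.toNat :=
  degreeOf_le_iff.2 fun s hs => by have := mem_degreeOfLE.1 h s hs; omega

theorem natCast_mem_degreeOfLE (c : ℕ) : (c : MvPolynomial σ R) ∈ degreeOfLE R i 0 := by
  simpa using mem_degreeOfLE_of_degreeOf_le (R := R) (degreeOf_C (c : R) i).le

theorem mul_mem_degreeOfLE (hp : p ∈ degreeOfLE R i d) (hq : q ∈ degreeOfLE R i e) :
    p * q ∈ degreeOfLE R i (d + e) := by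
  classical
  refine mem_degreeOfLE.2 fun s hs => ?_
  obtain ⟨a, ha, b, hb, rfl⟩ := Finset.mem_add.1 (support_mul p q hs)
  have := mem_degreeOfLE.1 hp a ha
  have := mem_degreeOfLE.1 hq b hb
  push_cast [Finsupp.add_apply]
  omega

theorem pow_mem_degreeOfLE (hp : p ∈ degreeOfLE R i d) (n : ℕ) :
    p ^ n ∈ degreeOfLE R i (n * d) := by
  induction n with
  | zero => simpa using natCast_mem_degreeOfLE (R := R) (i := i) 1
  | succ n ih => simpa [add_mul, pow_succ] using mul_mem_degreeOfLE ih hp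

theorem mem_degreeOfLE_of_mem_support_pderiv (hp : p ∈ degreeOfLE R i d) {s : σ →₀ ℕ}
    (hs : s ∈ (pderiv j p).support) : ((s i + Finsupp.single j 1 i : ℕ) : ℤ) ≤ d := by
  rw [mem_support_iff, coeff_pderiv] at hs
  exact mem_degreeOfLE.1 hp _ (mem_support_iff.2 (left_ne_zero_of_mul hs))

theorem pderiv_mem_degreeOfLE (hp : p ∈ degreeOfLE R i d) : pderiv j p ∈ degreeOfLE R i d :=
  mem_degreeOfLE.2 fun s hs => le_trans (by simp) (mem_degreeOfLE_of_mem_support_pderiv hp hs)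

theorem pderiv_self_mem_degreeOfLE (hp : p ∈ degreeOfLE R i d) :
    pderiv i p ∈ degreeOfLE R i (d - 1) :=
  mem_degreeOfLE.2 fun s hs => by
    have := mem_degreeOfLE_of_mem_support_pderiv hp hs
    push_cast [Finsupp.single_eq_same] at this
    omega

end MvPolynomial

section Recursion

variable {R : Type*} [CommRing R]

noncomputable def qStep (P : MvPolynomial (Fin 2) R) (c : ℕ) (q : MvPolynomial (Fin 2) R) :
    MvPolynomial (Fin 2) R :=
  pderiv 0 q * (pderiv 1 P) ^ 2
    - pderiv 1 q * pderiv 0 P * pderiv 1 P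
    - (c : MvPolynomial (Fin 2) R) * q * pderiv 1 (pderiv 0 P) * pderiv 1 P
    + (c : MvPolynomial (Fin 2) R) * q * pderiv 1 (pderiv 1 P) * pderiv 0 P

variable {P q : MvPolynomial (Fin 2) R} {m n a b : ℤ}

theorem qStep_mem_degreeOfLE_zero (hP : P ∈ degreeOfLE R 0 m) (hq : q ∈ degreeOfLE R 0 a)
    (c : ℕ) : qStep P c q ∈ degreeOfLE R 0 (a + 2 * m - 1) := by
  have hPx := pderiv_self_mem_degreeOfLE hP
  have hPy := pderiv_mem_degreeOfLE (j := 1) hP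
  have hc := natCast_mem_degreeOfLE (R := R) (i := (0 : Fin 2)) c
  refine add_mem (sub_mem (sub_mem ?_ ?_) ?_) ?_
  · exact degreeOfLE_mono (by push_cast; linarith) <|
      mul_mem_degreeOfLE (pderiv_self_mem_degreeOfLE hq) (pow_mem_degreeOfLE hPy 2)
  · exact degreeOfLE_mono (by linarith) <|
      mul_mem_degreeOfLE (mul_mem_degreeOfLE (pderiv_mem_degreeOfLE hq) hPx) hPy
  · exact degreeOfLE_mono (by linarith) <| mul_mem_degreeOfLE
      (mul_mem_degreeOfLE (mul_mem_degreeOfLE hc hq) (pderiv_mem_degreeOfLE hPx)) hPy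
  · exact degreeOfLE_mono (by linarith) <| mul_mem_degreeOfLE
      (mul_mem_degreeOfLE (mul_mem_degreeOfLE hc hq) (pderiv_mem_degreeOfLE hPy)) hPx

theorem qStep_mem_degreeOfLE_one (hP : P ∈ degreeOfLE R 1 n) (hq : q ∈ degreeOfLE R 1 b)
    (c : ℕ) : qStep P c q ∈ degreeOfLE R 1 (b + 2 * n - 2) := by
  have hPx := pderiv_mem_degreeOfLE (j := 0) hP
  have hPy := pderiv_self_mem_degreeOfLE hP
  have hc := natCast_mem_degreeOfLE (R := R) (i := (1 : Fin 2)) c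
  refine add_mem (sub_mem (sub_mem ?_ ?_) ?_) ?_
  · exact degreeOfLE_mono (by push_cast; linarith) <|
      mul_mem_degreeOfLE (pderiv_mem_degreeOfLE hq) (pow_mem_degreeOfLE hPy 2)
  · exact degreeOfLE_mono (by linarith) <|
      mul_mem_degreeOfLE (mul_mem_degreeOfLE (pderiv_self_mem_degreeOfLE hq) hPx) hPy
  · exact degreeOfLE_mono (by linarith) <| mul_mem_degreeOfLE
      (mul_mem_degreeOfLE (mul_mem_degreeOfLE hc hq) (pderiv_self_mem_degreeOfLE hPx)) hPy
  · exact degreeOfLE_mono (by linarith) <| mul_mem_degreeOfLE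
      (mul_mem_degreeOfLE (mul_mem_degreeOfLE hc hq) (pderiv_self_mem_degreeOfLE hPy)) hPx

end Recursion

theorem qk_degree_bounds (F : Type*) [Field F]
    (P : MvPolynomial (Fin 2) F) (m n : ℕ)
    (hPm : degreeOf 0 P ≤ m) (hPn : degreeOf 1 P ≤ n)
    (q : ℕ → MvPolynomial (Fin 2) F)
    (hq1 : q 1 = -pderiv 0 P)
    (hqrec : ∀ k, 1 ≤ k →
      q (k + 1) =
        pderiv 0 (q k) * (pderiv 1 P) ^ 2
        - pderiv 1 (q k) * pderiv 0 P * pderiv 1 P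
        - ((2 * k - 1 : ℕ) : MvPolynomial (Fin 2) F) * q k * pderiv 1 (pderiv 0 P) * pderiv 1 P
        + ((2 * k - 1 : ℕ) : MvPolynomial (Fin 2) F) * q k * pderiv 1 (pderiv 1 P) * pderiv 0 P) :
    ∀ k, 1 ≤ k →
      degreeOf 0 (q k) ≤ (2 * k - 1) * m - k ∧
      degreeOf 1 (q k) ≤ (2 * k - 1) * n - 2 * k + 2 := by
  have hP0 := mem_degreeOfLE_of_degreeOf_le hPm
  have hP1 := mem_degreeOfLE_of_degreeOf_le hPn
  have hbounds : ∀ k : ℕ, 1 ≤ k →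
      q k ∈ degreeOfLE F 0 ((2 * k - 1) * m - k) ∧
      q k ∈ degreeOfLE F 1 ((2 * k - 1) * n - 2 * k + 2) := by
    intro k hk
    induction k, hk using Nat.le_induction with
    | base =>
      rw [hq1]
      exact ⟨neg_mem (degreeOfLE_mono (by push_cast; linarith) (pderiv_self_mem_degreeOfLE hP0)),
        neg_mem (degreeOfLE_mono (by push_cast; linarith) (pderiv_mem_degreeOfLE hP1))⟩
    | succ k hk ih =>
      rw [hqrec k hk]
      exact ⟨degreeOfLE_mono (by push_cast; linarith) (qStep_mem_degreeOfLE_zero hP0 ih.1 _),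
        degreeOfLE_mono (by push_cast; linarith) (qStep_mem_degreeOfLE_one hP1 ih.2 _)⟩
  intro k hk
  obtain ⟨h0, h1⟩ := hbounds k hk
  -- lets `omega` match the atom `↑(2 * k - 1) * ↑m` it makes of the goal's product
  rw [show (2 * k - 1 : ℤ) = (2 * k - 1 : ℕ) by omega] at h0 h1
  exact ⟨(degreeOf_le_toNat_of_mem_degreeOfLE h0).trans (by omega),
    (degreeOf_le_toNat_of_mem_degreeOfLE h1).trans (by omega)⟩
end
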